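/- arXiv:1610.00341 — 3 statements merged into one kernel-verified Lean document; each statement's English description precedes it below -/
import Mathlib

section
/- Let P be a lattice (d,k)-polytope, let u be a vertex of P, and let c ∈ ℤ^d. Set γ = min{c·x : x ∈ P} and F = {x ∈ P : c·x = γ}. Then the graph distance from u to the face F satisfies d(u,F) ≤ c·u − γ. -/
/-!
A simplex-method argument. If `c·u > γ`, some vertex of `P` lies strictly below `u` in the
direction `c`, and then `u` has a neighbour `v` with `c·v < c·u`; as vertices and `c` are
integral, `c·v ≤ c·u - 1`, so after at most `c·u - γ` such steps one reaches a vertex of `F`.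

The existence of an improving edge is proved by induction on the number of points spanning the
polytope. A functional `ψ` exposing `u` is tilted towards the objective until its maximum is also
attained at a second point; the face it exposes is spanned by fewer points, and contains `u` and an
improving point. If the tilted functional is constant on the polytope, one tilts instead towards
a functional that is not an affine function of `ψ` there; if no such functional exists, the
polytope is a segment.
-/

open scoped BigOperators

/-- A lattice `(d,k)`-polytope: the convex hull in `ℝ^d` of a finite set of points
all of whose coordinates are integers between `0` and `k`. -/
def IsLatticePolytope (d k : ℕ) (P : Set (Fin d → ℝ)) : Prop :=
  ∃ V : Finset (Fin d → ℝ),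
    (∀ v ∈ V, ∀ i : Fin d, ∃ n : ℕ, n ≤ k ∧ v i = n) ∧
    P = convexHull ℝ (V : Set (Fin d → ℝ))

/-- The graph of a polytope `P`: its nodes are the vertices (extreme points) of `P`,
and `u`, `v` are adjacent when the segment `[u,v]` is a `1`-dimensional face
(an extreme subset) of `P`. -/
def polytopeGraph {d : ℕ} (P : Set (Fin d → ℝ)) : SimpleGraph (Fin d → ℝ) where
  Adj u v := u ≠ v ∧ u ∈ P.extremePoints ℝ ∧ v ∈ P.extremePoints ℝ ∧
    IsExtreme ℝ P (segment ℝ u v)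
  symm := by
    constructor
    rintro u v ⟨h1, h2, h3, h4⟩
    exact ⟨h1.symm, h3, h2, by rwa [segment_symm]⟩
  loopless := by constructor; rintro u ⟨h1, -⟩; exact h1 rfl

/-- The diameter `δ(P)` of the graph of a polytope `P`. -/
noncomputable def polyDiam {d : ℕ} (P : Set (Fin d → ℝ)) : ℕ :=
  sSup { n : ℕ | ∃ u ∈ P.extremePoints ℝ, ∃ v ∈ P.extremePoints ℝ,
    (polytopeGraph P).dist u v = n }

/-- The distance `d(u,F)` from a vertex `u` of `P` to a face `F` of `P`:
the minimum over the vertices `v` of `F` of the graph distance `d(u,v)`. -/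
noncomputable def distToFace {d : ℕ} (P : Set (Fin d → ℝ)) (u : Fin d → ℝ)
    (F : Set (Fin d → ℝ)) : ℕ :=
  sInf { n : ℕ | ∃ v ∈ F.extremePoints ℝ, (polytopeGraph P).dist u v = n }

/-- `δ(d,k)`: the largest possible diameter of the graph of a lattice `(d,k)`-polytope. -/
noncomputable def latticeDiam (d k : ℕ) : ℕ :=
  sSup { n : ℕ | ∃ P : Set (Fin d → ℝ), IsLatticePolytope d k P ∧ polyDiam P = n }

open Set

section Exposed

variable {E : Type*} [AddCommGroup E] [Module ℝ E] [TopologicalSpace E]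

theorem ContinuousLinearMap.toExposed_convexHull (l : StrongDual ℝ E) (s : Set E) :
    l.toExposed (convexHull ℝ s) = convexHull ℝ (l.toExposed s) := by
  classical
  refine subset_antisymm ?_ <| convexHull_min ?_ <|
    ContinuousLinearMap.toExposed.isExposed.convex (convex_convexHull ℝ s)
  · rintro _ ⟨hx, hmax⟩
    rw [convexHull_eq] at hx
    obtain ⟨ι, t, w, z, hw₀, hw₁, hz, rfl⟩ := hx
    have hl : l (t.centerMass w z) = ∑ i ∈ t, w i * l (z i) := by
      simp [Finset.centerMass_eq_of_sum_1 _ _ hw₁, map_sum]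
    -- a convex combination attains the maximum only if every point of positive weight does
    have hsupp : ∀ i ∈ t, w i ≠ 0 → l (t.centerMass w z) ≤ l (z i) := by
      intro i hi hwi
      by_contra! hlt
      have := Finset.sum_lt_sum
        (fun j hj =>
          mul_le_mul_of_nonneg_left (hmax _ (subset_convexHull ℝ s (hz j hj))) (hw₀ j hj))
        ⟨i, hi, mul_lt_mul_of_pos_left hlt ((hw₀ i hi).lt_of_ne' hwi)⟩
      rw [← Finset.sum_mul, hw₁, one_mul, ← hl] at this
      exact this.false
    rw [← Finset.centerMass_filter_ne_zero]
    refine Finset.centerMass_mem_convexHull _ (fun i hi => hw₀ i (Finset.mem_filter.1 hi).1)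
      (by rw [Finset.sum_filter_ne_zero, hw₁]; exact one_pos) fun i hi => ?_
    obtain ⟨hi, hwi⟩ := Finset.mem_filter.1 hi
    exact ⟨hz i hi, fun y hy => (hmax y (subset_convexHull ℝ s hy)).trans (hsupp i hi hwi)⟩
  · rintro x ⟨hxs, hmax⟩
    refine ⟨subset_convexHull ℝ s hxs, fun y hy => ?_⟩
    obtain ⟨z, hz, hyz⟩ :=
      (l.toLinearMap.convexOn convex_univ).exists_ge_of_mem_convexHull (subset_univ _) hy
    exact hyz.trans (hmax z hz)

theorem mem_extremePoints_convexHull_of_forall_lt {s : Set E} {x : E} (l : StrongDual ℝ E)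
    (hx : x ∈ s) (h : ∀ y ∈ s, y ≠ x → l y < l x) : x ∈ (convexHull ℝ s).extremePoints ℝ := by
  have hmax : l.toExposed s = {x} := by
    refine eq_singleton_iff_unique_mem.2 ⟨⟨hx, fun y hy => ?_⟩, fun y ⟨hy, hmax⟩ => ?_⟩
    · obtain rfl | hyx := eq_or_ne y x
      exacts [le_rfl, (h y hy hyx).le]
    · by_contra hyx
      exact (h y hy hyx).not_ge (hmax x hx)
  have := (ContinuousLinearMap.toExposed.isExposed (l := l) (A := convexHull ℝ s)).isExtreme
  rwa [l.toExposed_convexHull, hmax, convexHull_singleton, isExtreme_singleton] at this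

theorem Finset.isExtreme_convexHull_filter_forall_le (W : Finset E) (g : StrongDual ℝ E) :
    IsExtreme ℝ (convexHull ℝ (W : Set E))
      (convexHull ℝ ↑(W.filter fun v => ∀ w ∈ W, g w ≤ g v)) := by
  have : (↑(W.filter fun v => ∀ w ∈ W, g w ≤ g v) : Set E) = g.toExposed ↑W := by
    ext; simp [ContinuousLinearMap.toExposed]
  rw [this, ← g.toExposed_convexHull]
  exact ContinuousLinearMap.toExposed.isExposed.isExtreme

end Exposed

theorem Finset.exists_tilt {α : Type*} (W : Finset α) {u : α} {ψ η : α → ℝ}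
    (hψ : ∀ v ∈ W, v ≠ u → ψ v < ψ u) (hη : ∃ w ∈ W, η u < η w) :
    ∃ s > 0, (∀ v ∈ W, ψ v + s * η v ≤ ψ u + s * η u) ∧
      ∃ v ∈ W, v ≠ u ∧ ψ v + s * η v = ψ u + s * η u := by
  classical
  set S := W.filter fun v => η u < η v
  have hS : S.Nonempty := let ⟨w, hw, h⟩ := hη; ⟨w, mem_filter.2 ⟨hw, h⟩⟩
  have hSu : ∀ v ∈ S, v ≠ u := by rintro v hv rfl; simp [S] at hv
  have hSη : ∀ v ∈ S, 0 < η v - η u := fun v hv => sub_pos.2 (mem_filter.1 hv).2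
  -- `r v` is the tilt at which `v` catches up with `u`
  set r : α → ℝ := fun v => (ψ u - ψ v) / (η v - η u)
  have hs : 0 < S.inf' hS r := (S.lt_inf'_iff hS).2 fun v hv =>
    div_pos (sub_pos.2 (hψ v (mem_filter.1 hv).1 (hSu v hv))) (hSη v hv)
  obtain ⟨v₀, hv₀, hr⟩ := S.exists_mem_eq_inf' hS r
  refine ⟨S.inf' hS r, hs, fun v hv => ?_, v₀, (mem_filter.1 hv₀).1, hSu v₀ hv₀, ?_⟩
  · by_cases hvS : v ∈ S
    · have := (le_div_iff₀ (hSη v hvS)).1 (S.inf'_le r hvS)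
      linarith
    · have hη : η v ≤ η u := not_lt.1 fun h => hvS (mem_filter.2 ⟨hv, h⟩)
      have hψ : ψ v ≤ ψ u := by
        obtain rfl | hvu := eq_or_ne v u
        exacts [le_rfl, (hψ v hv hvu).le]
      nlinarith
  · rw [hr]
    simp only [r]
    field_simp [(hSη v₀ hv₀).ne']
    ring

section Normed

variable {E : Type*} [NormedAddCommGroup E] [NormedSpace ℝ E]

theorem right_mem_extremePoints_segment (x y : E) : y ∈ (segment ℝ x y).extremePoints ℝ := by
  obtain rfl | hxy := eq_or_ne x y
  · simp
  have key (l : StrongDual ℝ E) (h : l x < l y) : y ∈ (convexHull ℝ {x, y}).extremePoints ℝ :=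
    mem_extremePoints_convexHull_of_forall_lt l (by simp) (by rintro z (rfl | rfl) hz <;> simp_all)
  rw [← convexHull_pair]
  obtain ⟨l, hl⟩ := SeparatingDual.exists_separating_of_ne (R := ℝ) hxy
  rcases hl.lt_or_gt with h | h
  exacts [key l h, key (-l) (by simpa using h)]

theorem exists_forall_lt_of_mem_extremePoints_convexHull {s : Set E} (hs : s.Finite) {u : E}
    (hu : u ∈ (convexHull ℝ s).extremePoints ℝ) :
    ∃ ψ : StrongDual ℝ E, ∀ v ∈ s, v ≠ u → ψ v < ψ u := by
  have hnot : u ∉ convexHull ℝ (s \ {u}) := fun h =>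
    ((convex_convexHull ℝ s).mem_extremePoints_iff_mem_sdiff_convexHull_sdiff.1 hu).2
      (convexHull_mono (sdiff_subset_sdiff_left (subset_convexHull ℝ s)) h)
  obtain ⟨ψ, r, hlt, hr⟩ := geometric_hahn_banach_closed_point (convex_convexHull ℝ _)
    (hs.sdiff.isClosed_convexHull (𝕜 := ℝ)) hnot
  exact ⟨ψ, fun v hv hvu => (hlt v (subset_convexHull ℝ _ ⟨hv, hvu⟩)).trans hr⟩

theorem Finset.convexHull_eq_segment_of_forall_affine (W : Finset E) {ψ : StrongDual ℝ E} {u v : E}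
    (hu : u ∈ W) (hv : v ∈ W) (hvu : ψ v < ψ u) (hbound : ∀ w ∈ W, ψ v ≤ ψ w ∧ ψ w ≤ ψ u)
    (haff : ∀ η : StrongDual ℝ E, ∃ a b : ℝ, ∀ w ∈ W, η w = a + b * ψ w) :
    convexHull ℝ (W : Set E) = segment ℝ u v := by
  refine subset_antisymm (convexHull_min (fun w hw => ?_) (convex_segment u v))
    (segment_subset_convexHull hu hv)
  have hpos : 0 < ψ u - ψ v := sub_pos.2 hvu
  obtain ⟨hvw, hwu⟩ := hbound w hw
  refine ⟨(ψ w - ψ v) / (ψ u - ψ v), (ψ u - ψ w) / (ψ u - ψ v), by bound, by bound,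
    by field_simp; ring, (SeparatingDual.eq_iff_forall_dual_eq (R := ℝ)).2 fun η => ?_⟩
  obtain ⟨a, b, hab⟩ := haff η
  simp only [map_add, map_smul, smul_eq_mul, hab u hu, hab v hv, hab w hw]
  field_simp
  ring

theorem Finset.exists_isExtreme_segment_of_forall_affine (W : Finset E) {u : E} (hu : u ∈ W)
    {ψ φ : StrongDual ℝ E} (hψ : ∀ v ∈ W, v ≠ u → ψ v < ψ u)
    (haff : ∀ η : StrongDual ℝ E, ∃ a b : ℝ, ∀ w ∈ W, η w = a + b * ψ w)
    (hφ : ∃ w ∈ W, φ u < φ w) :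
    ∃ v, φ u < φ v ∧ v ∈ (convexHull ℝ (W : Set E)).extremePoints ℝ ∧
      IsExtreme ℝ (convexHull ℝ (W : Set E)) (segment ℝ u v) := by
  obtain ⟨w₀, hw₀, hφw₀⟩ := hφ
  obtain ⟨v, hv, hmin⟩ := W.exists_min_image ψ ⟨u, hu⟩
  have hψw₀ : ψ w₀ < ψ u := hψ w₀ hw₀ (by rintro rfl; exact hφw₀.false)
  have hle : ∀ w ∈ W, ψ w ≤ ψ u := fun w hw => by
    obtain rfl | hwu := eq_or_ne w u
    exacts [le_rfl, (hψ w hw hwu).le]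
  have hseg := W.convexHull_eq_segment_of_forall_affine hu hv ((hmin w₀ hw₀).trans_lt hψw₀)
    (fun w hw => ⟨hmin w hw, hle w hw⟩) haff
  obtain ⟨a, b, hab⟩ := haff φ
  refine ⟨v, ?_, hseg ▸ right_mem_extremePoints_segment u v, hseg ▸ IsExtreme.rfl⟩
  rw [hab u hu, hab w₀ hw₀] at hφw₀
  rw [hab u hu, hab v hv]
  nlinarith [hmin w₀ hw₀]

theorem Finset.exists_lt_of_not_affine (W : Finset E) {u : E} {ψ η : StrongDual ℝ E}
    (hη : ¬ ∃ a b : ℝ, ∀ w ∈ W, η w = a + b * ψ w) :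
    ∃ η' : StrongDual ℝ E, (¬ ∃ a b : ℝ, ∀ w ∈ W, η' w = a + b * ψ w) ∧ ∃ w ∈ W, η' u < η' w := by
  by_cases h : ∃ w ∈ W, η u < η w
  · exact ⟨η, hη, h⟩
  push Not at h
  refine ⟨-η, fun ⟨a, b, hab⟩ => hη ⟨-a, -b, fun w hw => ?_⟩, ?_⟩
  · have := hab w hw
    simp only [neg_apply] at this
    linarith
  · by_contra! h'
    refine hη ⟨η u, 0, fun w hw => ?_⟩
    have := h' w hw
    simp only [neg_apply, neg_le_neg_iff] at this
    linarith [h w hw]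

theorem Finset.exists_isExtreme_segment_of_exists_lt (W : Finset E) {u : E}
    (hu : u ∈ (convexHull ℝ (W : Set E)).extremePoints ℝ) (φ : StrongDual ℝ E)
    (hφ : ∃ w ∈ W, φ u < φ w) :
    ∃ v, φ u < φ v ∧ v ∈ (convexHull ℝ (W : Set E)).extremePoints ℝ ∧
      IsExtreme ℝ (convexHull ℝ (W : Set E)) (segment ℝ u v) := by
  classical
  induction W using Finset.strongInduction with
  | H W ih =>
  have huW : u ∈ W := by exact_mod_cast extremePoints_convexHull_subset hu
  obtain ⟨ψ, hψ⟩ := exists_forall_lt_of_mem_extremePoints_convexHull W.finite_toSet hu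
  have descend (g : StrongDual ℝ E) (hmax : ∀ w ∈ W, g w ≤ g u) (hproper : ∃ w ∈ W, g w < g u)
      (hv : ∃ v ∈ W, φ u < φ v ∧ g v = g u) :
      ∃ v, φ u < φ v ∧ v ∈ (convexHull ℝ (W : Set E)).extremePoints ℝ ∧
        IsExtreme ℝ (convexHull ℝ (W : Set E)) (segment ℝ u v) := by
    have hface := W.isExtreme_convexHull_filter_forall_le g
    have hu₁ : u ∈ W.filter fun v => ∀ w ∈ W, g w ≤ g v := mem_filter.2 ⟨huW, hmax⟩
    obtain ⟨v, hvW, hφv, hgv⟩ := hv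
    obtain ⟨v', hφv', hv', hseg⟩ := ih _
      (filter_ssubset.2 (let ⟨w, hw, hlt⟩ := hproper; ⟨w, hw, fun h => (h u huW).not_gt hlt⟩))
      (inter_extremePoints_subset_extremePoints_of_subset hface.1
        ⟨subset_convexHull ℝ _ (mem_coe.2 hu₁), hu⟩)
      ⟨v, mem_filter.2 ⟨hvW, hgv ▸ hmax⟩, hφv⟩
    exact ⟨v', hφv', hface.extremePoints_subset_extremePoints hv', hface.trans hseg⟩
  by_cases hcol : ∀ η : StrongDual ℝ E, ∃ a b : ℝ, ∀ w ∈ W, η w = a + b * ψ w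
  · exact W.exists_isExtreme_segment_of_forall_affine huW hψ hcol hφ
  obtain ⟨η, hη⟩ := not_forall.1 hcol
  obtain ⟨s, hs, hmax, v₀, hv₀, hv₀u, htie⟩ := W.exists_tilt hψ hφ
  have hφlt : ∀ v ∈ W, v ≠ u → ψ u + s * φ u ≤ ψ v + s * φ v → φ u < φ v :=
    fun v hv hvu h => by nlinarith [hψ v hv hvu]
  by_cases hdeg : ∃ w ∈ W, ψ w + s * φ w < ψ u + s * φ u
  · exact descend (ψ + s • φ) (by simpa using hmax) (by simpa using hdeg)
      ⟨v₀, hv₀, hφlt v₀ hv₀ hv₀u htie.ge, by simpa using htie⟩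
  -- `ψ + s • φ` is constant on `W`, so every other point of `W` improves `φ`: tilt towards `η`
  push Not at hdeg
  obtain ⟨η', hη', hη'u⟩ := W.exists_lt_of_not_affine (u := u) hη
  obtain ⟨s', hs', hmax', v₁, hv₁, hv₁u, htie'⟩ := W.exists_tilt hψ hη'u
  refine descend (ψ + s' • η') (by simpa using hmax') ?_
    ⟨v₁, hv₁, hφlt v₁ hv₁ hv₁u (hdeg v₁ hv₁), by simpa using htie'⟩
  by_contra! hconst
  refine hη' ⟨(ψ u + s' * η' u) / s', -1 / s', fun w hw => ?_⟩
  have := le_antisymm (hmax' w hw) (by simpa using hconst w hw)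
  field_simp
  linarith

end Normed

theorem SimpleGraph.exists_walk_length_le_of_descent {V : Type*} (G : SimpleGraph V)
    {p q : V → Prop} (f : V → ℝ) (hf : ∀ x, p x → 0 ≤ f x)
    (hstep : ∀ x, p x → ¬ q x → ∃ y, G.Adj x y ∧ p y ∧ f y + 1 ≤ f x) {x : V} (hx : p x) :
    ∃ y, q y ∧ ∃ w : G.Walk x y, (w.length : ℝ) ≤ f x := by
  obtain ⟨n, hn⟩ := exists_nat_gt (f x)
  induction n generalizing x with
  | zero => exact absurd hn (by simpa using hf x hx)
  | succ n ih =>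
    by_cases hq : q x
    · exact ⟨x, hq, .nil, by simpa using hf x hx⟩
    obtain ⟨y, hxy, hy, hfy⟩ := hstep x hx hq
    obtain ⟨z, hz, w, hw⟩ := ih hy (by push_cast at hn; linarith)
    exact ⟨z, hz, .cons hxy w, by rw [SimpleGraph.Walk.length_cons]; push_cast; linarith⟩

theorem exists_intCast_sum_mul {d : ℕ} (c : Fin d → ℤ) {x : Fin d → ℝ}
    (hx : ∀ i, ∃ n : ℤ, x i = n) : ∃ z : ℤ, ∑ i, (c i : ℝ) * x i = z := by
  choose n hn using hx
  exact ⟨∑ i, c i * n i, by simp [hn]⟩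

theorem exists_polytopeGraph_adj_add_one_le {d : ℕ} (V : Finset (Fin d → ℝ))
    (hV : ∀ v ∈ V, ∀ i, ∃ n : ℤ, v i = n) (c : Fin d → ℤ) {x : Fin d → ℝ}
    (hx : x ∈ (convexHull ℝ (V : Set (Fin d → ℝ))).extremePoints ℝ)
    (hlt : ∃ z ∈ convexHull ℝ (V : Set (Fin d → ℝ)), ∑ i, (c i : ℝ) * z i < ∑ i, (c i : ℝ) * x i) :
    ∃ y, (polytopeGraph (convexHull ℝ (V : Set (Fin d → ℝ)))).Adj x y ∧
      ∑ i, (c i : ℝ) * y i + 1 ≤ ∑ i, (c i : ℝ) * x i := by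
  let φ : StrongDual ℝ (Fin d → ℝ) := -∑ i, (c i : ℝ) • ContinuousLinearMap.proj i
  have hφ : ∀ z, φ z = -∑ i, (c i : ℝ) * z i := fun z => by simp [φ]
  obtain ⟨z, hz, hzx⟩ := hlt
  obtain ⟨w, hw, hzw⟩ :=
    (φ.toLinearMap.convexOn convex_univ).exists_ge_of_mem_convexHull (subset_univ _) hz
  obtain ⟨y, hxy, hy, hseg⟩ := V.exists_isExtreme_segment_of_exists_lt hx φ
    ⟨w, hw, lt_of_lt_of_le (by simpa [hφ] using hzx) hzw⟩
  rw [hφ, hφ, neg_lt_neg_iff] at hxy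
  obtain ⟨m, hm⟩ := exists_intCast_sum_mul c (hV x (extremePoints_convexHull_subset hx))
  obtain ⟨n, hn⟩ := exists_intCast_sum_mul c (hV y (extremePoints_convexHull_subset hy))
  refine ⟨y, ⟨by rintro rfl; exact hxy.false, hx, hy, hseg⟩, ?_⟩
  rw [hm, hn] at hxy ⊢
  exact_mod_cast hxy

/-- If `u` is a vertex of a lattice `(d,k)`-polytope `P`, `c ∈ ℤ^d`,
`γ = min {c·x : x ∈ P}`, and `F = {x ∈ P : c·x = γ}`, then `d(u,F) ≤ c·u − γ`. -/
theorem distToFace_le (d k : ℕ) (P : Set (Fin d → ℝ)) (hP : IsLatticePolytope d k P)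
    (u : Fin d → ℝ) (hu : u ∈ P.extremePoints ℝ)
    (c : Fin d → ℤ) (γ : ℝ)
    (hγ : IsLeast {t : ℝ | ∃ x ∈ P, ∑ i, (c i : ℝ) * x i = t} γ)
    (F : Set (Fin d → ℝ)) (hF : F = {x ∈ P | ∑ i, (c i : ℝ) * x i = γ}) :
    (distToFace P u F : ℝ) ≤ ∑ i, (c i : ℝ) * u i - γ := by
  obtain ⟨V, hV, rfl⟩ := hP
  subst hF
  set φ : (Fin d → ℝ) → ℝ := fun x => ∑ i, (c i : ℝ) * x i
  have hγφ : ∀ x ∈ convexHull ℝ (V : Set (Fin d → ℝ)), γ ≤ φ x := fun x hx => hγ.2 ⟨x, hx, rfl⟩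
  have hstep : ∀ x ∈ (convexHull ℝ (V : Set (Fin d → ℝ))).extremePoints ℝ,
      x ∉ {x ∈ convexHull ℝ ↑V | φ x = γ}.extremePoints ℝ → ∃ y,
        (polytopeGraph (convexHull ℝ ↑V)).Adj x y ∧ y ∈ (convexHull ℝ ↑V).extremePoints ℝ ∧
          φ y - γ + 1 ≤ φ x - γ := by
    intro x hx hxF
    have hγx : γ < φ x := (hγφ x hx.1).lt_of_ne fun h =>
      hxF (inter_extremePoints_subset_extremePoints_of_subset (sep_subset _ _) ⟨⟨hx.1, h.symm⟩, hx⟩)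
    obtain ⟨x₀, hx₀, hφx₀⟩ := hγ.1
    obtain ⟨y, hxy, hφy⟩ := exists_polytopeGraph_adj_add_one_le V
      (fun v hv i => let ⟨n, _, h⟩ := hV v hv i; ⟨n, h⟩) c hx ⟨x₀, hx₀, hφx₀ ▸ hγx⟩
    exact ⟨y, hxy, hxy.2.2.1, by linarith⟩
  obtain ⟨v, hvF, w, hw⟩ := (polytopeGraph _).exists_walk_length_le_of_descent (fun x => φ x - γ)
    (fun x hx => sub_nonneg.2 (hγφ x hx.1)) hstep hu
  have hdist : distToFace _ u _ ≤ w.length :=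
    (Nat.sInf_le ⟨v, hvF, rfl⟩ : distToFace _ u _ ≤ _).trans (SimpleGraph.dist_le w)
  calc (distToFace _ u _ : ℝ) ≤ w.length := by exact_mod_cast hdist
    _ ≤ φ u - γ := hw
end

section
/- Let u^0, u^1, …, u^p be the vertices of a lattice (2,k)-polygon listed consecutively in cyclic order around its boundary (clockwise or counter-clockwise). If u^p = (0,0) and u^0 − u^1 is one of the vectors (1,0), (0,1), (1,1), then for every j with 2 ≤ j < p one has u^j_1 + u^j_2 + 2 ≤ u^{j−1}_1 + u^{j−1}_2. -/
open scoped BigOperators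

/-!
An edge of a convex polygon leaves every other vertex strictly on one side of its line, and since
consecutive edges share vertices, it is the same side for all edges. Write `[v, w]` for the
determinant. For the edge from `c = u m` to `d = u (m + 1)`, with `o = u p` and `a = u 0`, the
three determinants in the identity
  `[d - c, a - c] (c - o)ᵣ + [d - c, o - c] (a - c)ᵣ = -(d - c)ᵣ [a - o, c - o]`
therefore have the same sign, so `dᵣ < cᵣ` in both coordinates `r` as soon as `o ≤ c ≤ a`.
Starting from `u 1 ≤ u 0`, induction along the boundary gives `u 0 ≥ u 1 > u 2 > ⋯ > u (p - 1)`,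
and since the vertices are lattice points, each strict inequality is a gap of at least `1` per
coordinate.
-/

open Function

/-- Positive iff `w` points to the left of `v`. -/
def cross (v w : Fin 2 → ℝ) : ℝ := v 0 * w 1 - v 1 * w 0

theorem collinear_of_cross_eq_zero {x y w : Fin 2 → ℝ} (h : cross (y - x) (w - x) = 0) :
    Collinear ℝ {w, x, y} := by
  rcases eq_or_ne x y with rfl | hxy
  · simpa using collinear_pair ℝ w x
  apply collinear_insert_of_mem_affineSpan_pair
  have hv : (y 0 - x 0) ^ 2 + (y 1 - x 1) ^ 2 ≠ 0 := by
    intro h0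
    apply hxy
    ext r
    fin_cases r <;> simp <;> nlinarith [sq_nonneg (y 0 - x 0), sq_nonneg (y 1 - x 1)]
  convert AffineMap.lineMap_mem_affineSpan_pair
    (((w 0 - x 0) * (y 0 - x 0) + (w 1 - x 1) * (y 1 - x 1)) /
      ((y 0 - x 0) ^ 2 + (y 1 - x 1) ^ 2)) x y using 1
  simp only [cross, Pi.sub_apply] at h
  ext r
  fin_cases r <;> simp [AffineMap.lineMap_apply_module] <;> field_simp
  · linear_combination -(y 1 - x 1) * h
  · linear_combination (y 0 - x 0) * h

theorem cross_sub_eq_zero_of_mem_segment {x y w : Fin 2 → ℝ} (h : w ∈ segment ℝ x y) :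
    cross (y - x) (w - x) = 0 := by
  rw [segment_eq_image] at h
  obtain ⟨θ, -, rfl⟩ := h
  simp only [cross, Pi.sub_apply, Pi.add_apply, Pi.smul_apply, smul_eq_mul]
  ring

theorem IsExtreme.mem_segment_of_collinear {𝕜 E : Type*} [Field 𝕜] [LinearOrder 𝕜]
    [IsStrictOrderedRing 𝕜] [AddCommGroup E] [Module 𝕜 E] {P : Set E} {x y w : E}
    (h : IsExtreme 𝕜 P (segment 𝕜 x y)) (hxy : x ≠ y) (hw : w ∈ P)
    (hcol : Collinear 𝕜 {w, x, y}) : w ∈ segment 𝕜 x y := by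
  have hx : x ∈ P := h.subset (left_mem_segment 𝕜 x y)
  have hy : y ∈ P := h.subset (right_mem_segment 𝕜 x y)
  rcases hcol.wbtw_or_wbtw_or_wbtw with hb | hb | hb <;> rw [← mem_segment_iff_wbtw] at hb
  · rcases eq_or_ne w x with rfl | hwx
    · exact left_mem_segment 𝕜 w y
    exact h.left_mem_of_mem_openSegment hw hy (left_mem_segment 𝕜 x y)
      (mem_openSegment_of_ne_left_right hwx hxy.symm hb)
  · rcases eq_or_ne w y with rfl | hwy
    · exact right_mem_segment 𝕜 x w
    exact h.right_mem_of_mem_openSegment hx hw (right_mem_segment 𝕜 x y)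
      (mem_openSegment_of_ne_left_right hxy hwy hb)
  · rwa [segment_symm]

section ExtremeSegment

variable {P : Set (Fin 2 → ℝ)} {x y : Fin 2 → ℝ}

theorem IsExtreme.eq_or_eq_of_cross_eq_zero (h : IsExtreme ℝ P (segment ℝ x y)) (hxy : x ≠ y)
    {w : Fin 2 → ℝ} (hw : w ∈ P.extremePoints ℝ) (h0 : cross (y - x) (w - x) = 0) :
    x = w ∨ y = w :=
  (mem_extremePoints_iff_forall_segment.1 hw).2 x (h.subset (left_mem_segment ℝ x y))
    y (h.subset (right_mem_segment ℝ x y))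
    (h.mem_segment_of_collinear hxy hw.1 (collinear_of_cross_eq_zero h0))

theorem IsExtreme.cross_nonneg_of_cross_pos (h : IsExtreme ℝ P (segment ℝ x y)) (hxy : x ≠ y)
    (hP : Convex ℝ P) {w₁ w₂ : Fin 2 → ℝ} (hw₁ : w₁ ∈ P) (hw₂ : w₂ ∈ P)
    (h₁ : 0 < cross (y - x) (w₁ - x)) : 0 ≤ cross (y - x) (w₂ - x) := by
  by_contra! h₂
  set s := cross (y - x) (w₁ - x)
  set t := -cross (y - x) (w₂ - x)
  have hst : 0 < s + t := by linarith
  set θ := s / (s + t)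
  have hθ : 0 < θ := div_pos h₁ hst
  have hθ' : 0 < 1 - θ := by rw [sub_pos, div_lt_one hst]; linarith
  have hq : (1 - θ) • w₁ + θ • w₂ ∈ openSegment ℝ w₁ w₂ := ⟨_, _, hθ', hθ, by ring, rfl⟩
  have hq0 : cross (y - x) ((1 - θ) • w₁ + θ • w₂ - x) = 0 := calc
    _ = (1 - θ) * s - θ * t := by
      simp only [s, t, cross, Pi.sub_apply, Pi.add_apply, Pi.smul_apply, smul_eq_mul]; ring
    _ = 0 := by simp only [θ]; field_simp; ring
  have hqseg := h.mem_segment_of_collinear hxy (hP.openSegment_subset hw₁ hw₂ hq)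
    (collinear_of_cross_eq_zero hq0)
  exact h₁.ne' (cross_sub_eq_zero_of_mem_segment
    (h.left_mem_of_mem_openSegment hw₁ hw₂ hqseg hq))

end ExtremeSegment

theorem strongLT_of_cross_mul_pos {o a c d : Fin 2 → ℝ} (hoc : o ≤ c) (hca : c ≤ a)
    (h₁ : 0 < cross (d - c) (a - c) * cross (a - o) (c - o))
    (h₂ : 0 < cross (d - c) (o - c) * cross (a - o) (c - o)) : StrongLT d c := by
  have key : ∀ r, cross (d - c) (a - c) * cross (a - o) (c - o) * (c r - o r) +
      cross (d - c) (o - c) * cross (a - o) (c - o) * (a r - c r)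
      = -(d r - c r) * cross (a - o) (c - o) ^ 2 := by
    intro r; fin_cases r <;> simp [cross] <;> ring
  intro r
  by_contra! hle
  have hsum := key r
  have hc := sub_nonneg.2 (hoc r)
  have ha := sub_nonneg.2 (hca r)
  have hco : c r - o r = 0 := by
    nlinarith [mul_nonneg (sub_nonneg.2 hle) (sq_nonneg (cross (a - o) (c - o))),
      mul_nonneg h₂.le ha]
  have hac : a r - c r = 0 := by
    nlinarith [mul_nonneg (sub_nonneg.2 hle) (sq_nonneg (cross (a - o) (c - o))),
      mul_nonneg h₁.le hc]
  have hE : cross (a - o) (c - o) = 0 := by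
    have hao : a r - o r = 0 := by linarith
    fin_cases r <;> simp [cross] at hco hao ⊢ <;> simp [hco, hao]
  simp [hE] at h₁

theorem pos_mul_of_pos_mul_of_pos_mul {α : Type*} [CommRing α] [LinearOrder α]
    [IsStrictOrderedRing α] {a b c : α} (h₁ : 0 < a * b) (h₂ : 0 < b * c) :
    0 < a * c := by
  nlinarith [mul_pos h₁ h₂, sq_nonneg b]

section Polygon

variable {n : ℕ} {P : Set (Fin 2 → ℝ)} {u : Fin (n + 1) → Fin 2 → ℝ}

def edgeSide (u : Fin (n + 1) → Fin 2 → ℝ) (m i : Fin (n + 1)) : ℝ :=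
  cross (u (m + 1) - u m) (u i - u m)

theorem edgeSide_ne_zero (hinj : Injective u)
    (hadj : ∀ m, (polytopeGraph P).Adj (u m) (u (m + 1))) {m i : Fin (n + 1)}
    (him : i ≠ m) (him' : i ≠ m + 1) : edgeSide u m i ≠ 0 := by
  intro h0
  obtain ⟨hne, -, -, hext⟩ := hadj m
  rcases hext.eq_or_eq_of_cross_eq_zero hne (hadj i).2.1 h0 with h | h
  exacts [him (hinj h).symm, him' (hinj h).symm]

theorem edgeSide_mul_nonneg (hP : Convex ℝ P)
    (hadj : ∀ m, (polytopeGraph P).Adj (u m) (u (m + 1))) (m i i' : Fin (n + 1)) :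
    0 ≤ edgeSide u m i * edgeSide u m i' := by
  obtain ⟨hne, -, -, hext⟩ := hadj m
  have hmem : ∀ i, u i ∈ P := fun i => (hadj i).2.1.1
  by_contra! h
  rcases mul_neg_iff.1 h with ⟨h₁, h₂⟩ | ⟨h₁, h₂⟩
  · exact (hext.cross_nonneg_of_cross_pos hne hP (hmem i) (hmem i') h₁).not_gt h₂
  · exact (hext.cross_nonneg_of_cross_pos hne hP (hmem i') (hmem i) h₂).not_gt h₁

theorem edgeSide_add_one_self (m : Fin (n + 1)) :
    edgeSide u (m + 1) m = edgeSide u m (m + 1 + 1) := by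
  simp only [edgeSide, cross, Pi.sub_apply]
  ring

theorem edgeSide_mul_edgeSide_pos (hn : 2 ≤ n) (hP : Convex ℝ P) (hinj : Injective u)
    (hadj : ∀ m, (polytopeGraph P).Adj (u m) (u (m + 1))) {m i m' i' : Fin (n + 1)}
    (hi : i ≠ m) (hi₁ : i ≠ m + 1) (hi' : i' ≠ m') (hi₁' : i' ≠ m' + 1) :
    0 < edgeSide u m i * edgeSide u m' i' := by
  have same : ∀ m i i' : Fin (n + 1), i ≠ m → i ≠ m + 1 → i' ≠ m → i' ≠ m + 1 →
      0 < edgeSide u m i * edgeSide u m i' := fun m i i' h₁ h₂ h₃ h₄ =>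
    (edgeSide_mul_nonneg hP hadj m i i').lt_of_ne'
      (mul_ne_zero (edgeSide_ne_zero hinj hadj h₁ h₂) (edgeSide_ne_zero hinj hadj h₃ h₄))
  have hne₁ : ∀ m : Fin (n + 1), m + 1 ≠ m := fun m => by
    rw [Ne, add_eq_left, Fin.ext_iff]; simp [Nat.mod_eq_of_lt (show 1 < n + 1 by omega)]
  have hne₂ : ∀ m : Fin (n + 1), m + 1 + 1 ≠ m := fun m => by
    rw [Ne, add_assoc, add_eq_left, Fin.ext_iff]
    simp [Fin.val_add, Nat.mod_eq_of_lt (show 1 < n + 1 by omega),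
      Nat.mod_eq_of_lt (show 1 + 1 < n + 1 by omega)]
  have hchain : ∀ m : Fin (n + 1),
      0 < edgeSide u 0 (0 + 1 + 1) * edgeSide u m (m + 1 + 1) := by
    intro m
    induction m using Fin.induction with
    | zero => exact same _ _ _ (hne₂ 0) (hne₁ _) (hne₂ 0) (hne₁ _)
    | succ m ih =>
      rw [← Fin.coeSucc_eq_succ]
      refine pos_mul_of_pos_mul_of_pos_mul ih ?_
      rw [← edgeSide_add_one_self]
      exact same _ _ _ (hne₁ _).symm (hne₂ _).symm (hne₂ _) (hne₁ _)
  have hcm : 0 < edgeSide u m (m + 1 + 1) * edgeSide u 0 (0 + 1 + 1) := by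
    rw [mul_comm]; exact hchain m
  exact pos_mul_of_pos_mul_of_pos_mul
    (pos_mul_of_pos_mul_of_pos_mul
      (pos_mul_of_pos_mul_of_pos_mul (same m i _ hi hi₁ (hne₂ m) (hne₁ _)) hcm) (hchain m'))
    (same m' _ i' (hne₂ m') (hne₁ _) hi' hi₁')

theorem strongLT_add_one_of_le_of_le (hP : Convex ℝ P) (hinj : Injective u)
    (hadj : ∀ m, (polytopeGraph P).Adj (u m) (u (m + 1))) {m : Fin (n + 1)}
    (hm : 1 ≤ (m : ℕ)) (hm' : (m : ℕ) + 1 < n)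
    (hlo : u (Fin.last n) ≤ u m) (hhi : u m ≤ u 0) : StrongLT (u (m + 1)) (u m) := by
  have hm₀ : m ≠ 0 := by rintro rfl; simp at hm
  have hml : m ≠ Fin.last n := by rintro rfl; simp at hm'
  have hm₁ : m + 1 ≠ 0 := by rwa [← Fin.last_add_one, Ne, add_left_inj]
  have hm₁' : m + 1 ≠ Fin.last n := by
    rw [Ne, Fin.ext_iff, Fin.val_add_one_of_lt (Fin.lt_last_iff_ne_last.2 hml), Fin.val_last]
    omega
  have hlast : m ≠ Fin.last n + 1 := by rwa [Fin.last_add_one]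
  have hn : 2 ≤ n := by omega
  have h₁ := edgeSide_mul_edgeSide_pos hn hP hinj hadj hm₀.symm hm₁.symm hml hlast
  have h₂ := edgeSide_mul_edgeSide_pos hn hP hinj hadj hml.symm hm₁'.symm hml hlast
  simp only [edgeSide, Fin.last_add_one] at h₁ h₂
  exact strongLT_of_cross_mul_pos hlo hhi h₁ h₂

open Fin.NatCast in
theorem strongLT_add_one_of_apply_one_le_apply_zero (hP : Convex ℝ P) (hinj : Injective u)
    (hadj : ∀ m, (polytopeGraph P).Adj (u m) (u (m + 1)))
    (hlo : ∀ i, u (Fin.last n) ≤ u i) (h₁₀ : u 1 ≤ u 0) {m : Fin (n + 1)}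
    (hm : 1 ≤ (m : ℕ)) (hm' : (m : ℕ) + 1 < n) : StrongLT (u (m + 1)) (u m) := by
  have hle : ∀ k : ℕ, 1 ≤ k → k < n → u k ≤ u 0 := by
    intro k hk
    induction k, hk using Nat.le_induction with
    | base => intro _; simpa using h₁₀
    | succ k hk ih =>
      intro hkn
      have hval : ((k : Fin (n + 1)) : ℕ) = k := Fin.val_cast_of_lt (by omega)
      have := strongLT_add_one_of_le_of_le hP hinj hadj (m := k) (by omega) (by omega) (hlo _)
        (ih (by omega))
      push_cast
      exact this.le.trans (ih (by omega))
  exact strongLT_add_one_of_le_of_le hP hinj hadj hm hm' (hlo m) (by simpa using hle m hm (by omega))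

end Polygon

section Lattice

variable {d k : ℕ} {P : Set (Fin d → ℝ)} {x y : Fin d → ℝ}

theorem IsLatticePolytope.convex (hP : IsLatticePolytope d k P) : Convex ℝ P := by
  obtain ⟨V, -, rfl⟩ := hP
  exact convex_convexHull ℝ _

theorem IsLatticePolytope.exists_nat_eq (hP : IsLatticePolytope d k P)
    (hx : x ∈ P.extremePoints ℝ) (i : Fin d) : ∃ n : ℕ, x i = n := by
  obtain ⟨V, hV, rfl⟩ := hP
  obtain ⟨n, -, hn⟩ := hV x (extremePoints_convexHull_subset hx) i
  exact ⟨n, hn⟩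

theorem IsLatticePolytope.nonneg (hP : IsLatticePolytope d k P) (hx : x ∈ P.extremePoints ℝ) :
    0 ≤ x := fun i => by
  obtain ⟨n, hn⟩ := hP.exists_nat_eq hx i
  simp [hn]

theorem IsLatticePolytope.add_one_le_of_lt (hP : IsLatticePolytope d k P)
    (hx : x ∈ P.extremePoints ℝ) (hy : y ∈ P.extremePoints ℝ) {i j : Fin d} (h : x i < y j) :
    x i + 1 ≤ y j := by
  obtain ⟨n, hn⟩ := hP.exists_nat_eq hx i
  obtain ⟨m, hm⟩ := hP.exists_nat_eq hy j
  rw [hn, hm] at h ⊢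
  exact_mod_cast Nat.cast_lt.1 h

end Lattice

theorem polygon_coord_sum_decreasing_general (k p : ℕ) (P : Set (Fin 2 → ℝ))
    (hP : IsLatticePolytope 2 k P)
    (u : Fin (p + 1) → (Fin 2 → ℝ))
    (hinj : Function.Injective u)
    (hadj : ∀ j : Fin (p + 1), (polytopeGraph P).Adj (u j) (u (j + 1)))
    (hlast : u (Fin.last p) = 0)
    (hfirst : u 0 - u 1 = ![1, 0] ∨ u 0 - u 1 = ![0, 1] ∨ u 0 - u 1 = ![1, 1]) :
    ∀ j : Fin (p + 1), 2 ≤ (j : ℕ) → (j : ℕ) < p →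
      u j 0 + u j 1 + 2 ≤ u (j - 1) 0 + u (j - 1) 1 := by
  intro j hj hjp
  have hvert : ∀ i, u i ∈ P.extremePoints ℝ := fun i => (hadj i).2.1
  have hlo : ∀ i, u (Fin.last p) ≤ u i := fun i => hlast ▸ hP.nonneg (hvert i)
  have h₁₀ : u 1 ≤ u 0 := by
    rw [← sub_nonneg]
    rcases hfirst with h | h | h <;> rw [h] <;> intro r <;> fin_cases r <;> simp
  have hj₁ : ((j - 1 : Fin (p + 1)) : ℕ) = j - 1 := by
    rw [Fin.coe_sub_one, if_neg]; rintro rfl; simp at hj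
  have hlt := strongLT_add_one_of_apply_one_le_apply_zero hP.convex hinj hadj hlo h₁₀ (m := j - 1)
    (by omega) (by omega)
  rw [sub_add_cancel] at hlt
  linarith [hP.add_one_le_of_lt (hvert j) (hvert (j - 1)) (hlt 0),
    hP.add_one_le_of_lt (hvert j) (hvert (j - 1)) (hlt 1)]

/-- Let `u 0, …, u p` be the vertices of a (two-dimensional) lattice `(2,k)`-polygon,
listed consecutively in cyclic order around its boundary. If `u p = (0,0)` and
`u 0 − u 1` is `(1,0)`, `(0,1)`, or `(1,1)`, then
`u j 1 + u j 2 + 2 ≤ u (j−1) 1 + u (j−1) 2` whenever `2 ≤ j < p`. -/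
theorem polygon_coord_sum_decreasing (k p : ℕ) (P : Set (Fin 2 → ℝ))
    (hP : IsLatticePolytope 2 k P) (hdim : affineSpan ℝ P = ⊤)
    (u : Fin (p + 1) → (Fin 2 → ℝ))
    (hinj : Function.Injective u)
    (hrange : P.extremePoints ℝ = Set.range u)
    (hadj : ∀ j : Fin (p + 1), (polytopeGraph P).Adj (u j) (u (j + 1)))
    (hlast : u (Fin.last p) = 0)
    (hfirst : u 0 - u 1 = ![1, 0] ∨ u 0 - u 1 = ![0, 1] ∨ u 0 - u 1 = ![1, 1]) :
    ∀ j : Fin (p + 1), 2 ≤ (j : ℕ) → (j : ℕ) < p →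
      u j 0 + u j 1 + 2 ≤ u (j - 1) 0 + u (j - 1) 1 :=
  polygon_coord_sum_decreasing_general k p P hP u hinj hadj hlast hfirst
end

section
/- Let P be a lattice (d,k)-polytope, let j ∈ {1,…,d}, and let l_j = min{x_j : x ∈ P} and h_j = max{x_j : x ∈ P}. Let L_j = P ∩ {x ∈ ℝ^d : x_j = l_j} and H_j = P ∩ {x ∈ ℝ^d : x_j = h_j}. Then the diameter of the graph of P satisfies δ(P) ≤ max{δ(L_j), δ(H_j)} + h_j − l_j. -/
open scoped BigOperators

/-!
A vertex `u` that does not minimize the linear functional `f` has an edge along which `f`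
strictly decreases (the simplex-method lemma). When `f` is integral on the vertices, each such
step lowers `f` by at least one, so `u` reaches a vertex of the minimal face of `f` in at most
`f u - min f` steps. Applied to `x ↦ x j` and `x ↦ -x j`, and using that the graph of a face is
connected (again by descent), this gives
`d(u, v) ≤ (u j - l) + δ(L) + (v j - l)` and `d(u, v) ≤ (h - u j) + δ(H) + (h - v j)`;
their average is at most `max δ(L) δ(H) + h - l`.
-/

section Faces

variable {E : Type*} [AddCommGroup E] [Module ℝ E] {f : E →ₗ[ℝ] ℝ} {c : ℝ}

lemma le_of_mem_convexHull {s : Set E} (hc : ∀ x ∈ s, c ≤ f x) {x : E}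
    (hx : x ∈ convexHull ℝ s) : c ≤ f x :=
  convexHull_min hc (convex_halfSpace_ge f.isLinear c) hx

lemma isExtreme_sep_eq_of_le {A : Set E} (hc : ∀ x ∈ A, c ≤ f x) :
    IsExtreme ℝ A {x ∈ A | f x = c} := by
  refine ⟨Set.sep_subset _ _, fun x₁ hx₁ x₂ hx₂ x ⟨_, hxc⟩ ⟨a, b, ha, hb, hab, hx⟩ ↦ ⟨hx₁, ?_⟩⟩
  have hfx : a * f x₁ + b * f x₂ = c := by rw [← hxc, ← hx, map_add, map_smul, map_smul]; rfl
  have h₁ : a * (f x₁ - c) = -(b * (f x₂ - c)) := by linear_combination hfx - c * hab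
  exact le_antisymm (by nlinarith [mul_nonneg hb.le (sub_nonneg.2 (hc x₂ hx₂))]) (hc x₁ hx₁)

lemma sep_convexHull_eq_convexHull_sep {s : Set E} (hc : ∀ x ∈ s, c ≤ f x) :
    {x ∈ convexHull ℝ s | f x = c} = convexHull ℝ {x ∈ s | f x = c} := by
  refine Set.Subset.antisymm ?_ (Set.subset_inter (convexHull_mono (Set.sep_subset _ _))
    (convexHull_min (fun x hx ↦ hx.2) (convex_hyperplane f.isLinear c)))
  rintro x ⟨hx, hxc⟩
  have hs : s = {y ∈ s | f y = c} ∪ {y ∈ s | c < f y} := by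
    ext y
    constructor
    · intro hy
      rcases (hc y hy).eq_or_lt with h | h
      exacts [Or.inl ⟨hy, h.symm⟩, Or.inr ⟨hy, h⟩]
    · rintro (hy | hy) <;> exact hy.1
  have hlt : convexHull ℝ {y ∈ s | c < f y} ⊆ {y | c < f y} :=
    convexHull_min (fun y hy ↦ hy.2) (convex_halfSpace_gt f.isLinear c)
  rcases Set.eq_empty_or_nonempty {y ∈ s | c < f y} with h₁ | h₁
  · rwa [hs, h₁, Set.union_empty] at hx
  rcases Set.eq_empty_or_nonempty {y ∈ s | f y = c} with h₀ | h₀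
  · rw [hs, h₀, Set.empty_union] at hx
    exact absurd hxc (hlt hx).ne'
  rw [hs, convexHull_union h₀ h₁] at hx
  obtain ⟨a, ha, b, hb, p, q, -, -, hpq, rfl⟩ := mem_convexJoin.1 hx
  have hfa : f a = c := (convexHull_min (fun y hy ↦ hy.2) (convex_hyperplane f.isLinear c) ha)
  have hq0 : q = 0 := by
    simp only [map_add, map_smul, smul_eq_mul, hfa] at hxc
    have : q * (f b - c) = 0 := by linear_combination hxc - c * hpq
    exact (mul_eq_zero.1 this).resolve_right (sub_pos.2 (hlt hb)).ne'
  simpa [hq0, show p = 1 by linarith] using ha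

lemma convexHull_filter_eq {V : Finset E} (hc : ∀ w ∈ V, c ≤ f w) :
    convexHull ℝ (V.filter (f · = c) : Set E) = {x ∈ convexHull ℝ ↑V | f x = c} := by
  rw [Finset.coe_filter, sep_convexHull_eq_convexHull_sep hc]
  rfl

lemma isExtreme_convexHull_filter {V : Finset E} (hc : ∀ w ∈ V, c ≤ f w) :
    IsExtreme ℝ (convexHull ℝ ↑V) (convexHull ℝ (V.filter (f · = c) : Set E)) :=
  convexHull_filter_eq hc ▸ isExtreme_sep_eq_of_le fun _ hx ↦ le_of_mem_convexHull hc hx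

lemma mem_extremePoints_convexHull_filter {V : Finset E} (hc : ∀ w ∈ V, c ≤ f w) {w : E}
    (hw : w ∈ (convexHull ℝ ↑V).extremePoints ℝ) (hfw : f w = c) :
    w ∈ (convexHull ℝ (V.filter (f · = c) : Set E)).extremePoints ℝ :=
  inter_extremePoints_subset_extremePoints_of_subset (isExtreme_convexHull_filter hc).subset
    ⟨convexHull_filter_eq hc ▸ ⟨hw.1, hfw⟩, hw⟩

lemma mem_segment_of_smul_sub_eq {u v w : E} {a b : ℝ} (ha : 0 < a) (hb : 0 ≤ b) (hba : b ≤ a)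
    (h : a • (w - u) = b • (v - u)) : w ∈ segment ℝ u v := by
  rw [segment_eq_image']
  refine ⟨b / a, ⟨div_nonneg hb ha.le, div_le_one_of_le₀ hba ha.le⟩, ?_⟩
  show u + (b / a) • (v - u) = w
  rw [div_eq_inv_mul, mul_smul, ← h, smul_smul, inv_mul_cancel₀ ha.ne', one_smul,
    add_sub_cancel]

/-- The face of `convexHull V` minimizing `g + t • f`, where `t` is the least slope
`(g w - g u) / (f u - f w)` over the points `w` below `u`, is the segment from `u` to a
minimizer of the slope; genericity of `g` makes all slope minimizers collinear with `u`. -/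
lemma exists_isExtreme_segment {V : Finset E} {u : E} {g : E →ₗ[ℝ] ℝ}
    (hg : ∀ w ∈ V, w ≠ u → g u < g w)
    (hgen : ∀ w ∈ V, ∀ w' ∈ V, f w < f u → f w' < f u →
      (g w - g u) * (f u - f w') = (g w' - g u) * (f u - f w) →
      (f u - f w') • (w - u) = (f u - f w) • (w' - u))
    (hu : u ∈ V) (hB : ∃ w ∈ V, f w < f u) :
    ∃ v ∈ V, f v < f u ∧ IsExtreme ℝ (convexHull ℝ ↑V) (segment ℝ u v) := by
  classical
  let s (w : E) := (g w - g u) / (f u - f w)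
  obtain ⟨v, hvB, hvmin⟩ := (V.filter (f · < f u)).exists_min_image (fun w ↦ toLex (s w, f w))
    (by simpa [Finset.Nonempty] using hB)
  rw [Finset.mem_filter] at hvB
  let φ := g + s v • f
  have hφ (w : E) : φ w = g w + s v * f w := rfl
  have hslope {w : E} (hw : f w < f u) : φ w - φ u = (s w - s v) * (f u - f w) := by
    have hs : s w * (f u - f w) = g w - g u := div_mul_cancel₀ _ (sub_pos.2 hw).ne'
    rw [hφ, hφ]
    linear_combination -hs
  have hmin : ∀ w ∈ V, φ u ≤ φ w ∧ (φ w = φ u → w ∈ segment ℝ u v) := by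
    intro w hw
    rcases eq_or_ne w u with rfl | hwu
    · exact ⟨le_rfl, fun _ ↦ left_mem_segment ℝ _ _⟩
    rcases lt_or_ge (f w) (f u) with hwf | hwf
    · obtain ⟨hsvw, hfvw⟩ := Prod.Lex.toLex_le_toLex'.1 (hvmin w (by simp [hw, hwf]))
      have hφw := hslope hwf
      refine ⟨by nlinarith, fun hφwu ↦ ?_⟩
      have hsw : s w = s v := by
        rw [hφwu, sub_self, eq_comm, mul_eq_zero, sub_eq_zero] at hφw
        exact hφw.resolve_right (sub_pos.2 hwf).ne'
      refine mem_segment_of_smul_sub_eq (sub_pos.2 hvB.2) (sub_pos.2 hwf).le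
        (by linarith [hfvw hsw.symm]) (hgen w hw v hvB.1 hwf hvB.2 ?_)
      exact (div_eq_div_iff (sub_pos.2 hwf).ne' (sub_pos.2 hvB.2).ne').1 hsw
    · have hsv : 0 < s v :=
        div_pos (sub_pos.2 (hg v hvB.1 (ne_of_apply_ne f hvB.2.ne))) (sub_pos.2 hvB.2)
      have : φ u < φ w := by
        rw [hφ, hφ]; nlinarith [hg w hw hwu]
      exact ⟨this.le, fun h ↦ absurd h this.ne'⟩
  have hface : {x ∈ convexHull ℝ ↑V | φ x = φ u} = segment ℝ u v := by
    have hφv : φ v = φ u := by linarith [hslope hvB.2]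
    rw [sep_convexHull_eq_convexHull_sep fun w hw ↦ (hmin w hw).1]
    refine Set.Subset.antisymm
      (convexHull_min (fun w hw ↦ (hmin w hw.1).2 hw.2) (convex_segment u v)) ?_
    exact (convex_convexHull ℝ _).segment_subset (subset_convexHull ℝ _ ⟨hu, rfl⟩)
      (subset_convexHull ℝ _ ⟨hvB.1, hφv⟩)
  refine ⟨v, hvB.1, hvB.2, hface ▸ isExtreme_sep_eq_of_le fun x hx ↦ ?_⟩
  exact le_of_mem_convexHull (fun w hw ↦ (hmin w hw).1) hx

lemma mem_extremePoints_segment_of_lt {u v : E} (h : f v < f u) :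
    v ∈ (segment ℝ u v).extremePoints ℝ := by
  have hc : ∀ x ∈ ({u, v} : Set E), f v ≤ f x := by
    rintro x (rfl | rfl)
    exacts [h.le, le_rfl]
  have hv : {x ∈ ({u, v} : Set E) | f x = f v} = {v} := by
    ext x
    simp only [Set.mem_insert_iff, Set.mem_singleton_iff, Set.mem_ofPred_eq]
    constructor
    · rintro ⟨rfl | rfl, hx⟩
      exacts [absurd hx h.ne', rfl]
    · rintro rfl
      exact ⟨Or.inr rfl, rfl⟩
  have := isExtreme_sep_eq_of_le fun x hx ↦ le_of_mem_convexHull hc hx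
  rwa [sep_convexHull_eq_convexHull_sep hc, hv, convexHull_singleton, isExtreme_singleton,
    convexHull_pair] at this

end Faces

section Polytope

variable {d : ℕ}

open MeasureTheory in
/-- Functionals strictly separating `u` from `W` form a nonempty open set, while those vanishing
somewhere on `Z` form a Lebesgue-null union of hyperplanes. -/
lemma exists_dual_lt_and_ne_zero_of_notMem_convexHull {u : Fin d → ℝ} {W : Set (Fin d → ℝ)}
    (hW : W.Finite) (hu : u ∉ convexHull ℝ W) {Z : Finset (Fin d → ℝ)} (hZ : 0 ∉ Z) :
    ∃ g : (Fin d → ℝ) →ₗ[ℝ] ℝ, (∀ w ∈ W, g u < g w) ∧ ∀ z ∈ Z, g z ≠ 0 := by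
  let U := ⋂ w ∈ W, {y : Fin d → ℝ | y ⬝ᵥ u < y ⬝ᵥ w}
  let N := ⋃ z ∈ Z, (LinearMap.ker (dotProductEquiv ℝ (Fin d) z) : Set (Fin d → ℝ))
  have hU : IsOpen U := hW.isOpen_biInter fun w _ ↦ isOpen_lt
    (continuous_id.dotProduct continuous_const) (continuous_id.dotProduct continuous_const)
  obtain ⟨g₀, r, hg₀u, hg₀W⟩ :=
    geometric_hahn_banach_point_closed (convex_convexHull ℝ W) (hW.isClosed_convexHull ℝ) hu
  have hg₀ : (dotProductEquiv ℝ (Fin d)).symm g₀ ∈ U := by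
    have key (x : Fin d → ℝ) : (dotProductEquiv ℝ (Fin d)).symm g₀ ⬝ᵥ x = g₀ x := by
      rw [← dotProductEquiv_apply_apply, LinearEquiv.apply_symm_apply]; rfl
    simp only [U, Set.mem_iInter₂, Set.mem_ofPred_eq, key]
    exact fun w hw ↦ hg₀u.trans (hg₀W w (subset_convexHull ℝ W hw))
  have hN : volume N = 0 := by
    refine (measure_biUnion_null_iff Z.countable_toSet).2 fun z hz ↦ ?_
    refine Measure.addHaar_submodule _ _ fun htop ↦ ?_
    have : z ⬝ᵥ z = 0 := by simpa using htop.ge (Submodule.mem_top (x := z))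
    exact hZ (dotProduct_self_eq_zero.1 this ▸ hz)
  obtain ⟨y, hyU, hyN⟩ : ∃ y ∈ U, y ∉ N := by
    by_contra! h
    exact (hU.measure_pos volume ⟨_, hg₀⟩).ne' (measure_mono_null h hN)
  refine ⟨dotProductEquiv ℝ (Fin d) y, fun w hw ↦ ?_, fun z hz hyz ↦ hyN ?_⟩
  · simpa using Set.mem_iInter₂.1 hyU w hw
  · simp only [N, Set.mem_iUnion]
    exact ⟨z, hz, by simpa [dotProduct_comm] using hyz⟩

lemma polytopeGraph_mono {P F : Set (Fin d → ℝ)} (hF : IsExtreme ℝ P F) :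
    polytopeGraph F ≤ polytopeGraph P :=
  fun _ _ ⟨hne, hu, hv, hseg⟩ ↦ ⟨hne, hF.extremePoints_subset_extremePoints hu,
    hF.extremePoints_subset_extremePoints hv, hF.trans hseg⟩

lemma exists_adj_lt {V : Finset (Fin d → ℝ)} {u : Fin d → ℝ}
    (hu : u ∈ (convexHull ℝ ↑V).extremePoints ℝ) {f : (Fin d → ℝ) →ₗ[ℝ] ℝ}
    (hB : ∃ w ∈ V, f w < f u) :
    ∃ v, (polytopeGraph (convexHull ℝ ↑V)).Adj u v ∧ f v < f u := by
  classical
  have huV : u ∈ V := extremePoints_convexHull_subset hu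
  have hsep : u ∉ convexHull ℝ (↑V \ {u}) := fun h ↦
    ((convex_convexHull ℝ _).mem_extremePoints_iff_mem_sdiff_convexHull_sdiff.1 hu).2
      (convexHull_mono (Set.sdiff_subset_sdiff_left (subset_convexHull ℝ _)) h)
  -- `g` kills `ζ (w, w')` exactly when `w` and `w'` have equal slopes, and `ζ (w, w') = 0`
  -- makes them collinear with `u`.
  let ζ (p : (Fin d → ℝ) × (Fin d → ℝ)) :=
    (f u - f p.2) • (p.1 - u) - (f u - f p.1) • (p.2 - u)
  obtain ⟨g, hgV, hgζ⟩ := exists_dual_lt_and_ne_zero_of_notMem_convexHull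
    (V.finite_toSet.sdiff) hsep (Finset.notMem_erase 0 ((V ×ˢ V).image ζ))
  have hgen : ∀ w ∈ V, ∀ w' ∈ V, f w < f u → f w' < f u →
      (g w - g u) * (f u - f w') = (g w' - g u) * (f u - f w) →
      (f u - f w') • (w - u) = (f u - f w) • (w' - u) := by
    intro w hw w' hw' _ _ hslope
    by_contra hne
    refine hgζ (ζ (w, w')) (Finset.mem_erase.2 ⟨sub_ne_zero.2 hne, ?_⟩) ?_
    · exact Finset.mem_image_of_mem ζ (Finset.mem_product.2 ⟨hw, hw'⟩)
    · simp only [ζ, map_sub, map_smul, smul_eq_mul]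
      linear_combination hslope
  obtain ⟨v, -, hvf, hseg⟩ := exists_isExtreme_segment
    (fun w hw hwu ↦ hgV w ⟨hw, hwu⟩) hgen huV hB
  exact ⟨v, ⟨fun h ↦ hvf.ne (h ▸ rfl), hu,
    hseg.extremePoints_subset_extremePoints (mem_extremePoints_segment_of_lt hvf), hseg⟩, hvf⟩

lemma exists_walk_to_min {V : Finset (Fin d → ℝ)} {f : (Fin d → ℝ) →ₗ[ℝ] ℝ} {w₀ : Fin d → ℝ}
    (hw₀V : w₀ ∈ V) (hw₀ : ∀ w ∈ V, f w₀ ≤ f w) (r : (Fin d → ℝ) → ℕ)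
    (hr : ∀ v ∈ V, ∀ w ∈ V, f v < f w → r v < r w) {u : Fin d → ℝ}
    (hu : u ∈ (convexHull ℝ ↑V).extremePoints ℝ) :
    ∃ w ∈ (convexHull ℝ ↑V).extremePoints ℝ, f w = f w₀ ∧
      ∃ p : (polytopeGraph (convexHull ℝ ↑V)).Walk u w, p.length ≤ r u := by
  induction hn : r u using Nat.strong_induction_on generalizing u with
  | _ n ih =>
    have huV : u ∈ V := extremePoints_convexHull_subset hu
    rcases (hw₀ u huV).eq_or_lt with h | h
    · exact ⟨u, hu, h.symm, .nil, Nat.zero_le _⟩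
    obtain ⟨v, hadj, hv⟩ := exists_adj_lt hu ⟨w₀, hw₀V, h⟩
    have hvn : r v < n := hn ▸ hr v (extremePoints_convexHull_subset hadj.2.2.1) u huV hv
    obtain ⟨w, hw, hfw, p, hp⟩ := ih (r v) hvn hadj.2.2.1 rfl
    exact ⟨w, hw, hfw, .cons hadj p, by rw [SimpleGraph.Walk.length_cons]; omega⟩

lemma exists_walk_to_min_of_forall_isInt {V : Finset (Fin d → ℝ)} {f : (Fin d → ℝ) →ₗ[ℝ] ℝ}
    (hint : ∀ w ∈ V, ∃ n : ℤ, f w = n) {w₀ : Fin d → ℝ} (hw₀V : w₀ ∈ V)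
    (hw₀ : ∀ w ∈ V, f w₀ ≤ f w) {u : Fin d → ℝ} (hu : u ∈ (convexHull ℝ ↑V).extremePoints ℝ) :
    ∃ w ∈ (convexHull ℝ ↑V).extremePoints ℝ, f w = f w₀ ∧
      ∃ p : (polytopeGraph (convexHull ℝ ↑V)).Walk u w, (p.length : ℝ) ≤ f u - f w₀ := by
  have hr : ∀ v ∈ V, ∀ w ∈ V, f v < f w → ⌊f v - f w₀⌋₊ < ⌊f w - f w₀⌋₊ := by
    intro v hv w hw hvw
    obtain ⟨a, ha⟩ := hint v hv
    obtain ⟨b, hb⟩ := hint w hw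
    have hab : f v + 1 ≤ f w := by
      rw [ha, hb] at hvw ⊢
      exact_mod_cast Int.cast_lt.1 hvw
    rw [Nat.lt_iff_add_one_le, ← Nat.floor_add_one (sub_nonneg.2 (hw₀ v hv))]
    exact Nat.floor_le_floor (by linarith)
  obtain ⟨w, hw, hfw, p, hp⟩ := exists_walk_to_min hw₀V hw₀ _ hr hu
  refine ⟨w, hw, hfw, p, ?_⟩
  calc (p.length : ℝ) ≤ ⌊f u - f w₀⌋₊ := by exact_mod_cast hp
    _ ≤ f u - f w₀ := Nat.floor_le (sub_nonneg.2 (hw₀ u (extremePoints_convexHull_subset hu)))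

theorem polytopeGraph_convexHull_reachable {V : Finset (Fin d → ℝ)} {u v : Fin d → ℝ}
    (hu : u ∈ (convexHull ℝ ↑V).extremePoints ℝ) (hv : v ∈ (convexHull ℝ ↑V).extremePoints ℝ) :
    (polytopeGraph (convexHull ℝ ↑V)).Reachable u v := by
  classical
  induction V using Finset.strongInduction generalizing u v with
  | H V ih =>
  rcases eq_or_ne u v with rfl | huv
  · rfl
  obtain ⟨j, hj⟩ := Function.ne_iff.1 huv
  let f : (Fin d → ℝ) →ₗ[ℝ] ℝ := LinearMap.proj j
  have huV : u ∈ V := extremePoints_convexHull_subset hu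
  have hvV : v ∈ V := extremePoints_convexHull_subset hv
  obtain ⟨w₀, hw₀V, hw₀⟩ := V.exists_min_image f ⟨u, huV⟩
  have hr : ∀ v ∈ V, ∀ w ∈ V, f v < f w →
      (V.filter (f · < f v)).card < (V.filter (f · < f w)).card :=
    fun v hv w hw hvw ↦ Finset.card_lt_card <| Finset.ssubset_iff_of_subset
      (fun x hx ↦ by simp only [Finset.mem_filter] at hx ⊢; exact ⟨hx.1, hx.2.trans hvw⟩) |>.2
      ⟨v, by simp [hv, hvw], by simp⟩
  obtain ⟨wu, hwu, hfwu, pu, -⟩ := exists_walk_to_min hw₀V hw₀ _ hr hu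
  obtain ⟨wv, hwv, hfwv, pv, -⟩ := exists_walk_to_min hw₀V hw₀ _ hr hv
  have hsub : V.filter (f · = f w₀) ⊂ V := by
    refine Finset.filter_ssubset.2 ?_
    by_contra! h
    exact hj ((h u huV).trans (h v hvV).symm)
  have hreach := ih _ hsub (mem_extremePoints_convexHull_filter hw₀ hwu hfwu)
    (mem_extremePoints_convexHull_filter hw₀ hwv hfwv)
  exact pu.reachable.trans <|
    (hreach.mono (polytopeGraph_mono (isExtreme_convexHull_filter hw₀))).trans pv.reachable.symm

lemma dist_le_polyDiam_convexHull {V : Finset (Fin d → ℝ)} {u v : Fin d → ℝ}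
    (hu : u ∈ (convexHull ℝ ↑V).extremePoints ℝ) (hv : v ∈ (convexHull ℝ ↑V).extremePoints ℝ) :
    (polytopeGraph (convexHull ℝ ↑V)).dist u v ≤ polyDiam (convexHull ℝ (V : Set (Fin d → ℝ))) :=
  have hfin : ((convexHull ℝ ↑V).extremePoints ℝ).Finite :=
    V.finite_toSet.subset extremePoints_convexHull_subset
  le_csSup ((hfin.image2 (polytopeGraph _).dist hfin).bddAbove.mono
    (by rintro _ ⟨u, hu, v, hv, rfl⟩; exact Set.mem_image2_of_mem hu hv)) ⟨u, hu, v, hv, rfl⟩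

lemma polyDiam_le_of_forall_dist_le {P : Set (Fin d → ℝ)} {C : ℝ} (hC : 0 ≤ C)
    (h : ∀ u ∈ P.extremePoints ℝ, ∀ v ∈ P.extremePoints ℝ, ((polytopeGraph P).dist u v : ℝ) ≤ C) :
    (polyDiam P : ℝ) ≤ C :=
  calc (polyDiam P : ℝ) ≤ ⌊C⌋₊ := Nat.cast_le.2 <| csSup_le' <| by
        rintro _ ⟨u, hu, v, hv, rfl⟩
        exact Nat.le_floor (h u hu v hv)
    _ ≤ C := Nat.floor_le hC

lemma dist_le_of_isLeast {V : Finset (Fin d → ℝ)} {f : (Fin d → ℝ) →ₗ[ℝ] ℝ}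
    (hint : ∀ w ∈ V, ∃ n : ℤ, f w = n) {l : ℝ} (hl : IsLeast (f '' convexHull ℝ ↑V) l)
    {u v : Fin d → ℝ} (hu : u ∈ (convexHull ℝ ↑V).extremePoints ℝ)
    (hv : v ∈ (convexHull ℝ ↑V).extremePoints ℝ) :
    ((polytopeGraph (convexHull ℝ ↑V)).dist u v : ℝ) ≤
      f u - l + polyDiam {x ∈ convexHull ℝ ↑V | f x = l} + (f v - l) := by
  obtain ⟨w₀, hw₀V, hw₀⟩ := V.exists_min_image f ⟨u, extremePoints_convexHull_subset hu⟩
  obtain rfl : l = f w₀ := hl.unique ⟨⟨w₀, subset_convexHull ℝ _ hw₀V, rfl⟩, by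
    rintro _ ⟨x, hx, rfl⟩; exact le_of_mem_convexHull hw₀ hx⟩
  obtain ⟨wu, hwu, hfwu, pu, hpu⟩ := exists_walk_to_min_of_forall_isInt hint hw₀V hw₀ hu
  obtain ⟨wv, hwv, hfwv, pv, hpv⟩ := exists_walk_to_min_of_forall_isInt hint hw₀V hw₀ hv
  have hwu' := mem_extremePoints_convexHull_filter hw₀ hwu hfwu
  have hwv' := mem_extremePoints_convexHull_filter hw₀ hwv hfwv
  obtain ⟨q, hq⟩ := (polytopeGraph_convexHull_reachable hwu' hwv').exists_walk_length_eq_dist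
  have hqF : (q.length : ℝ) ≤ polyDiam (convexHull ℝ (V.filter (f · = f w₀) : Set (Fin d → ℝ))) :=
    by exact_mod_cast hq ▸ dist_le_polyDiam_convexHull hwu' hwv'
  have hdist := SimpleGraph.dist_le <| pu.append <|
    (q.mapLe (polytopeGraph_mono (isExtreme_convexHull_filter hw₀))).append pv.reverse
  simp only [SimpleGraph.Walk.length_append, SimpleGraph.Walk.length_mapLe,
    SimpleGraph.Walk.length_reverse] at hdist
  rw [← convexHull_filter_eq hw₀]
  have : ((polytopeGraph (convexHull ℝ ↑V)).dist u v : ℝ) ≤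
      pu.length + (q.length + pv.length) := by exact_mod_cast hdist
  linarith

lemma dist_le_of_isGreatest {V : Finset (Fin d → ℝ)} {f : (Fin d → ℝ) →ₗ[ℝ] ℝ}
    (hint : ∀ w ∈ V, ∃ n : ℤ, f w = n) {h : ℝ} (hh : IsGreatest (f '' convexHull ℝ ↑V) h)
    {u v : Fin d → ℝ} (hu : u ∈ (convexHull ℝ ↑V).extremePoints ℝ)
    (hv : v ∈ (convexHull ℝ ↑V).extremePoints ℝ) :
    ((polytopeGraph (convexHull ℝ ↑V)).dist u v : ℝ) ≤
      h - f u + polyDiam {x ∈ convexHull ℝ ↑V | f x = h} + (h - f v) := by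
  have hint' : ∀ w ∈ V, ∃ n : ℤ, (-f) w = n := fun w hw ↦
    let ⟨n, hn⟩ := hint w hw
    ⟨-n, by simp [hn]⟩
  have hh' : IsLeast ((-f) '' convexHull ℝ ↑V) (-h) := by
    obtain ⟨x, hx, hxh⟩ := hh.1
    refine ⟨⟨x, hx, by simp [hxh]⟩, ?_⟩
    rintro _ ⟨y, hy, rfl⟩
    exact neg_le_neg (hh.2 ⟨y, hy, rfl⟩)
  have := dist_le_of_isLeast hint' hh' hu hv
  simp only [LinearMap.neg_apply, neg_inj, sub_neg_eq_add] at this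
  linarith

end Polytope

/-- Let `P` be a lattice `(d,k)`-polytope, `j` a coordinate index, `l` and `h` the
minimum and maximum of `x j` over `x ∈ P`, and `L`, `H` the corresponding faces of `P`.
Then `δ(P) ≤ max {δ(L), δ(H)} + h − l`. -/
theorem polyDiam_le_max_faces (d k : ℕ) (P : Set (Fin d → ℝ))
    (hP : IsLatticePolytope d k P) (j : Fin d) (l h : ℝ)
    (hl : IsLeast {t : ℝ | ∃ x ∈ P, x j = t} l)
    (hh : IsGreatest {t : ℝ | ∃ x ∈ P, x j = t} h)
    (L H : Set (Fin d → ℝ))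
    (hL : L = {x ∈ P | x j = l}) (hH : H = {x ∈ P | x j = h}) :
    (polyDiam P : ℝ) ≤ (max (polyDiam L) (polyDiam H) : ℕ) + h - l := by
  obtain ⟨V, hVint, rfl⟩ := hP
  let f : (Fin d → ℝ) →ₗ[ℝ] ℝ := LinearMap.proj j
  have hint : ∀ w ∈ V, ∃ n : ℤ, f w = n := fun w hw ↦
    let ⟨n, _, hn⟩ := hVint w hw j
    ⟨n, by simp [f, hn]⟩
  have hLV : {x ∈ convexHull ℝ ↑V | f x = l} = L := by rw [hL]; rfl
  have hHV : {x ∈ convexHull ℝ ↑V | f x = h} = H := by rw [hH]; rfl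
  have hLM : (polyDiam L : ℝ) ≤ (max (polyDiam L) (polyDiam H) : ℕ) := by
    exact_mod_cast le_max_left _ _
  have hHM : (polyDiam H : ℝ) ≤ (max (polyDiam L) (polyDiam H) : ℕ) := by
    exact_mod_cast le_max_right _ _
  refine polyDiam_le_of_forall_dist_le (by linarith [hl.2 hh.1, (polyDiam L).cast_nonneg (α := ℝ)])
    fun u hu v hv ↦ ?_
  have hdL := hLV ▸ dist_le_of_isLeast hint hl hu hv
  have hdH := hHV ▸ dist_le_of_isGreatest hint hh hu hv
  linarith
end
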